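/- arXiv:2303.13725 — 5 statements merged into one kernel-verified Lean document; each statement's English description precedes it below -/
import Mathlib

section
/- For every integer n > 1, Φ(n) < 6n·n^{1/3}, where Φ(n) := max{m : φ(m) divides 2n}. -/
/-!
Comparing `m³` with `φ(m)⁴` prime power by prime power, one has `p³ φ(pᵏ)⁴ ≥ p^{3k} (p - 1)⁴`
for `k ≥ 1`, so a factor `pᵏ` can make `m³ / φ(m)⁴` grow only for `p = 2` (by at most `8`)
and `p = 3` (by at most `27 / 16`). Hence `2 m³ ≤ 27 φ(m)⁴`, with equality only at `m = 6`.
If `φ(m) ∣ 2n` this gives `m³ < 27 (2n)⁴ / 2 = (6 n^{4/3})³` whenever `n > 1`.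
-/

/-- `Φ(n)` is the largest positive integer `m` such that `φ(m)` divides `2n`. -/
noncomputable def Phi (n : ℕ) : ℕ := sSup {m : ℕ | 0 < m ∧ Nat.totient m ∣ 2 * n}

open Nat

namespace Nat

theorem pow_three_mul_totient_prime_pow_pow_four {p k : ℕ} (hp : p.Prime) (hk : k ≠ 0) :
    p ^ 3 * φ (p ^ k) ^ 4 = p ^ (k - 1) * ((p ^ k) ^ 3 * (p - 1) ^ 4) := by
  obtain ⟨j, rfl⟩ : ∃ j, k = j + 1 := ⟨k - 1, by omega⟩
  rw [totient_prime_pow_succ hp, Nat.add_sub_cancel]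
  ring

theorem prime_pow_cube_mul_le {p k : ℕ} (hp : p.Prime) (hk : k ≠ 0) :
    (p ^ k) ^ 3 * (p - 1) ^ 4 ≤ p ^ 3 * φ (p ^ k) ^ 4 := by
  rw [pow_three_mul_totient_prime_pow_pow_four hp hk]
  exact le_mul_of_one_le_left' (one_le_pow _ _ hp.pos)

theorem prime_pow_cube_mul_lt {p k : ℕ} (hp : p.Prime) (hk : 1 < k) :
    (p ^ k) ^ 3 * (p - 1) ^ 4 < p ^ 3 * φ (p ^ k) ^ 4 := by
  have hp0 : 0 < p := hp.pos
  have hp1 : 0 < p - 1 := Nat.sub_pos_of_lt hp.one_lt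
  rw [pow_three_mul_totient_prime_pow_pow_four hp (by omega)]
  exact lt_mul_left (by positivity) (one_lt_pow (by omega) hp.one_lt)

theorem prime_pow_cube_mul_lt_of_le_three {p k : ℕ} (hp : p.Prime) (hp3 : p ≤ 3) (hk : k ≠ 1) :
    (p ^ k) ^ 3 * (p - 1) ^ 4 < p ^ 3 * φ (p ^ k) ^ 4 := by
  rcases Nat.eq_zero_or_pos k with rfl | hk0
  · interval_cases p <;> simp_all +decide
  · exact prime_pow_cube_mul_lt hp (by omega)

theorem prime_pow_cube_mul_le_of_le_three {p : ℕ} (hp : p.Prime) (hp3 : p ≤ 3) (k : ℕ) :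
    (p ^ k) ^ 3 * (p - 1) ^ 4 ≤ p ^ 3 * φ (p ^ k) ^ 4 := by
  rcases eq_or_ne k 1 with rfl | hk
  · exact prime_pow_cube_mul_le hp one_ne_zero
  · exact (prime_pow_cube_mul_lt_of_le_three hp hp3 hk).le

theorem prime_pow_cube_lt_totient_pow_four {p k : ℕ} (hp : p.Prime) (hp5 : 5 ≤ p) (hk : k ≠ 0) :
    (p ^ k) ^ 3 < φ (p ^ k) ^ 4 := by
  have hp3 : p ^ 3 < (p - 1) ^ 4 := by
    obtain ⟨q, rfl⟩ : ∃ q, p = q + 5 := ⟨p - 5, by omega⟩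
    rw [show q + 5 - 1 = q + 4 by omega]
    nlinarith [pow_pos (show 0 < q + 5 by omega) 3]
  refine Nat.lt_of_mul_lt_mul_left (a := p ^ 3) ?_
  calc p ^ 3 * (p ^ k) ^ 3 < (p ^ k) ^ 3 * (p - 1) ^ 4 := by
        rw [mul_comm]; exact Nat.mul_lt_mul_of_pos_left hp3 (by positivity)
    _ ≤ p ^ 3 * φ (p ^ k) ^ 4 := prime_pow_cube_mul_le hp hk

theorem cube_lt_totient_pow_four_of_coprime_six {r : ℕ} (hr : r.Coprime 6) (hr1 : r ≠ 1) :
    r ^ 3 < φ r ^ 4 := by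
  induction r using Nat.recOnPosPrimePosCoprime with
  | prime_pow p k hp hk =>
    have hp6 : p.Coprime 6 := hr.coprime_dvd_left (dvd_pow_self p hk.ne')
    have hp5 : 5 ≤ p := by
      by_contra! h
      interval_cases p <;> simp_all +decide
    exact prime_pow_cube_lt_totient_pow_four hp hp5 hk.ne'
  | zero => simp at hr
  | one => exact absurd rfl hr1
  | coprime a b ha hb hab iha ihb =>
    rw [totient_mul hab, mul_pow, mul_pow]
    exact mul_lt_mul'' (iha hr.coprime_mul_right ha.ne') (ihb hr.coprime_mul_left hb.ne')

theorem cube_le_totient_pow_four_of_coprime_six {r : ℕ} (hr : r.Coprime 6) :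
    r ^ 3 ≤ φ r ^ 4 := by
  rcases eq_or_ne r 1 with rfl | hr1
  · simp
  · exact (cube_lt_totient_pow_four_of_coprime_six hr hr1).le

theorem two_mul_cube_lt_totient_pow_four {m : ℕ} (hm : m ≠ 0) (hm6 : m ≠ 6) :
    2 * m ^ 3 < 27 * φ m ^ 4 := by
  obtain ⟨a, m₁, h2m₁, rfl⟩ := exists_eq_pow_mul_and_not_dvd hm 2 (by norm_num)
  obtain ⟨b, r, h3r, rfl⟩ :=
    exists_eq_pow_mul_and_not_dvd (right_ne_zero_of_mul hm) 3 (by norm_num)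
  have h2r : ¬ 2 ∣ r := fun h ↦ h2m₁ (h.mul_left _)
  have hr6 : r.Coprime 6 := Nat.Coprime.mul_right
    (prime_two.coprime_iff_not_dvd.2 h2r).symm (prime_three.coprime_iff_not_dvd.2 h3r).symm
  have htot : φ (2 ^ a * (3 ^ b * r)) = φ (2 ^ a) * (φ (3 ^ b) * φ r) := by
    rw [totient_mul ((prime_two.coprime_iff_not_dvd.2 h2m₁).pow_left a),
      totient_mul ((prime_three.coprime_iff_not_dvd.2 h3r).pow_left b)]
  have h2 := prime_pow_cube_mul_le_of_le_three prime_two (by norm_num) a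
  have h3 := prime_pow_cube_mul_le_of_le_three prime_three le_rfl b
  have hr := cube_le_totient_pow_four_of_coprime_six hr6
  have hr0 : r ≠ 0 := by rintro rfl; simp at hm
  have hφ3 : 0 < φ (3 ^ b) := totient_pos.2 (by positivity)
  have hφr : 0 < φ r := totient_pos.2 (Nat.pos_of_ne_zero hr0)
  suffices h : ((2 ^ a) ^ 3 * (2 - 1) ^ 4) * (((3 ^ b) ^ 3 * (3 - 1) ^ 4) * r ^ 3) <
      (2 ^ 3 * φ (2 ^ a) ^ 4) * ((3 ^ 3 * φ (3 ^ b) ^ 4) * φ r ^ 4) by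
    have h16 : 16 * (2 ^ a * (3 ^ b * r)) ^ 3 < 216 * φ (2 ^ a * (3 ^ b * r)) ^ 4 := by
      rw [htot]; convert h using 1 <;> ring
    omega
  have hne : a ≠ 1 ∨ b ≠ 1 ∨ r ≠ 1 := by
    by_contra! h
    obtain ⟨rfl, rfl, rfl⟩ := h
    exact hm6 rfl
  rcases hne with ha | hb | hr1
  · exact Nat.mul_lt_mul_of_lt_of_le (prime_pow_cube_mul_lt_of_le_three prime_two (by norm_num) ha)
      (Nat.mul_le_mul h3 hr) (by positivity)
  · exact Nat.mul_lt_mul_of_le_of_lt h2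
      (Nat.mul_lt_mul_of_lt_of_le (prime_pow_cube_mul_lt_of_le_three prime_three le_rfl hb) hr
        (by positivity)) (by positivity)
  · exact Nat.mul_lt_mul_of_le_of_lt h2
      (Nat.mul_lt_mul_of_le_of_lt h3 (cube_lt_totient_pow_four_of_coprime_six hr6 hr1)
        (by positivity)) (by positivity)

theorem two_mul_cube_le_totient_pow_four (m : ℕ) : 2 * m ^ 3 ≤ 27 * φ m ^ 4 := by
  rcases eq_or_ne m 0 with rfl | hm
  · simp
  rcases eq_or_ne m 6 with rfl | hm6
  · decide
  exact (two_mul_cube_lt_totient_pow_four hm hm6).le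

theorem bddAbove_setOf_totient_le (N : ℕ) : BddAbove {m | φ m ≤ N} := by
  refine ⟨27 * N ^ 4, fun m (hm : φ m ≤ N) ↦ ?_⟩
  calc m ≤ 2 * m ^ 3 := by nlinarith [Nat.le_self_pow (by norm_num : 3 ≠ 0) m]
    _ ≤ 27 * φ m ^ 4 := two_mul_cube_le_totient_pow_four m
    _ ≤ 27 * N ^ 4 := by gcongr

end Nat

theorem Phi_mem {n : ℕ} (hn : n ≠ 0) : 0 < Phi n ∧ φ (Phi n) ∣ 2 * n := by
  exact Nat.sSup_mem (s := {m | 0 < m ∧ φ m ∣ 2 * n}) ⟨1, one_pos, by simp⟩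
    ((bddAbove_setOf_totient_le (2 * n)).mono fun m hm ↦ Nat.le_of_dvd (by omega) hm.2)

theorem Phi_pow_three_lt {n : ℕ} (hn : 1 < n) : Phi n ^ 3 < 216 * n ^ 4 := by
  obtain ⟨hpos, hdvd⟩ := Phi_mem (by omega : n ≠ 0)
  rcases eq_or_ne (Phi n) 6 with h6 | h6
  · rw [h6]
    nlinarith [Nat.pow_le_pow_left hn 4]
  have hle : φ (Phi n) ≤ 2 * n := Nat.le_of_dvd (by omega) hdvd
  have := two_mul_cube_lt_totient_pow_four hpos.ne' h6
  nlinarith [Nat.pow_le_pow_left hle 4]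

/-- For every integer `n > 1`, `Φ(n) < 6·n·n^{1/3}`. -/
theorem Phi_lt (n : ℕ) (hn : 1 < n) :
    (Phi n : ℝ) < 6 * (n : ℝ) * (n : ℝ) ^ ((1 : ℝ) / 3) := by
  have hcube : (6 * (n : ℝ) * (n : ℝ) ^ ((1 : ℝ) / 3)) ^ 3 = 216 * (n : ℝ) ^ 4 := by
    rw [mul_pow, ← Real.rpow_natCast ((n : ℝ) ^ ((1 : ℝ) / 3)) 3, ← Real.rpow_mul (by positivity)]
    norm_num
    ring
  refine lt_of_pow_lt_pow_left₀ 3 (by positivity) ?_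
  rw [hcube]
  exact_mod_cast Phi_pow_three_lt hn
end

section
/- If n is an odd positive integer, then Φ(n) ≤ 6n, where Φ(n) := max{m : φ(m) divides 2n}. -/
namespace Nat

open scoped Nat

lemma four_dvd_totient_of_odd_primes_dvd {m p r : ℕ} (hp : p.Prime) (hr : r.Prime)
    (hp2 : p ≠ 2) (hr2 : r ≠ 2) (hpr : p ≠ r) (hpm : p ∣ m) (hrm : r ∣ m) : 4 ∣ φ m := by
  have hcop : Coprime p r := (coprime_primes hp hr).2 hpr
  have hdvd : φ p * φ r ∣ φ m := by
    rw [← totient_mul hcop]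
    exact totient_dvd_of_dvd (hcop.mul_dvd_of_dvd_of_dvd hpm hrm)
  rw [totient_prime hp, totient_prime hr] at hdvd
  obtain ⟨x, hx⟩ := hp.even_sub_one hp2
  obtain ⟨y, hy⟩ := hr.even_sub_one hr2
  exact dvd_trans ⟨x * y, by rw [hx, hy]; ring⟩ hdvd

lemma two_pow_le_two_mul_totient (a : ℕ) : 2 ^ a ≤ 2 * φ (2 ^ a) := by
  cases a with
  | zero => simp
  | succ a => rw [totient_prime_pow_succ prime_two, pow_succ]; omega

lemma two_mul_pow_le_three_mul_totient {p : ℕ} (hp : p.Prime) (hp2 : p ≠ 2) (b : ℕ) :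
    2 * p ^ b ≤ 3 * φ (p ^ b) := by
  have hp3 : 3 ≤ p := lt_of_le_of_ne hp.two_le hp2.symm
  cases b with
  | zero => simp
  | succ b =>
    rw [totient_prime_pow_succ hp, pow_succ]
    calc 2 * (p ^ b * p) = p ^ b * (2 * p) := by ring
      _ ≤ p ^ b * (3 * (p - 1)) := Nat.mul_le_mul_left _ (by omega)
      _ = 3 * (p ^ b * (p - 1)) := by ring

lemma exists_odd_prime_pow_eq_of_not_four_dvd_totient {q : ℕ} (hq : Odd q)
    (h4 : ¬ 4 ∣ φ q) : ∃ p b, p.Prime ∧ p ≠ 2 ∧ q = p ^ b := by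
  have ne_two_of_dvd {d : ℕ} (hd : d.Prime) (hdq : d ∣ q) : d ≠ 2 := by
    rintro rfl
    exact (not_even_iff_odd.2 hq) (even_iff_two_dvd.2 hdq)
  rcases eq_or_ne q 1 with rfl | hq1
  · exact ⟨3, 0, prime_three, by decide, rfl⟩
  have hp := minFac_prime hq1
  refine ⟨q.minFac, _, hp, ne_two_of_dvd hp (minFac_dvd q),
    eq_prime_pow_of_unique_prime_dvd hq.pos.ne' fun hd hdq => ?_⟩
  by_contra hne
  exact h4 (four_dvd_totient_of_odd_primes_dvd hd hp (ne_two_of_dvd hd hdq)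
    (ne_two_of_dvd hp (minFac_dvd q)) hne hdq (minFac_dvd q))

lemma le_three_mul_totient_of_not_four_dvd {m : ℕ} (hm : m ≠ 0) (h4 : ¬ 4 ∣ φ m) :
    m ≤ 3 * φ m := by
  obtain ⟨a, q, hq, rfl⟩ := exists_eq_two_pow_mul_odd hm
  have hcop : Coprime (2 ^ a) q := (coprime_two_left.2 hq).pow_left a
  rw [totient_mul hcop] at h4 ⊢
  obtain ⟨p, b, hp, hp2, rfl⟩ :=
    exists_odd_prime_pow_eq_of_not_four_dvd_totient hq fun h => h4 (dvd_mul_of_dvd_right h _)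
  have := Nat.mul_le_mul (two_pow_le_two_mul_totient a) (two_mul_pow_le_three_mul_totient hp hp2 b)
  linarith

end Nat

theorem Phi_le_of_odd_general (n : ℕ) (hodd : Odd n) : Phi n ≤ 6 * n := by
  apply csSup_le ⟨1, by simp⟩
  rintro m ⟨hm, hdvd⟩
  have h2n : ¬ 4 ∣ 2 * n := by
    obtain ⟨k, rfl⟩ := hodd
    omega
  have h4 : ¬ 4 ∣ m.totient := fun h => h2n (h.trans hdvd)
  have hle : m.totient ≤ 2 * n := Nat.le_of_dvd (Nat.mul_pos two_pos hodd.pos) hdvd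
  have := Nat.le_three_mul_totient_of_not_four_dvd hm.ne' h4
  omega

/-- If `n` is an odd positive integer, then `Φ(n) ≤ 6n`. -/
theorem Phi_le_of_odd (n : ℕ) (hn : 0 < n) (hodd : Odd n) : Phi n ≤ 6 * n :=
  Phi_le_of_odd_general n hodd
end

section
/- Let n > 3 be an odd prime. If 2n+1 is prime, then Φ(n) = 4n+2; if 2n+1 is not prime, then Φ(n) = 6. Here Φ(n) := max{m : φ(m) divides 2n}. -/
lemma dvd_two_mul_prime {n d : ℕ} (hn : Nat.Prime n) (hd : d ∣ 2 * n) :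
    d = 1 ∨ d = 2 ∨ d = n ∨ d = 2 * n := by
  by_cases h : n ∣ d
  · obtain ⟨e, rfl⟩ := h
    have he : e ∣ 2 := by
      rw [mul_comm 2 n] at hd
      exact (Nat.mul_dvd_mul_iff_left hn.pos).mp hd
    have h1 : 0 < e := Nat.pos_of_dvd_of_pos he two_pos
    have h2 : e ≤ 2 := Nat.le_of_dvd two_pos he
    interval_cases e <;> omega
  · have hc : Nat.Coprime d n := ((hn.coprime_iff_not_dvd).mpr h).symm
    have h2 : d ∣ 2 := hc.dvd_of_dvd_mul_right hd
    have h1 : 0 < d := Nat.pos_of_dvd_of_pos h2 two_pos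
    have h2' : d ≤ 2 := Nat.le_of_dvd two_pos h2
    omega

/-- classification of primes dividing an `m` with `φ(m) ∣ 2n` -/
lemma prime_factor_classify {n m p : ℕ} (hn : Nat.Prime n) (h3 : 3 < n) (hodd : Odd n)
    (hp : Nat.Prime p) (hpm : p ∣ m) (hd : Nat.totient m ∣ 2 * n) :
    p = 2 ∨ p = 3 ∨ p = 2 * n + 1 := by
  have h1 : p - 1 ∣ 2 * n := by
    have := (Nat.totient_dvd_of_dvd hpm).trans hd
    rwa [Nat.totient_prime hp] at this
  have hp2 := hp.two_le
  rcases dvd_two_mul_prime hn h1 with h | h | h | h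
  · left; omega
  · right; left; omega
  · -- p = n + 1, even and > 3, impossible
    exfalso
    have hpe : p = n + 1 := by omega
    have : Even p := by rw [hpe]; exact Odd.add_one hodd
    have := (Nat.Prime.even_iff hp).mp this
    omega
  · right; right; omega

lemma two_dvd_n_false {n : ℕ} (hodd : Odd n) (h : 2 ∣ n) : False := by
  rw [Nat.odd_iff] at hodd; omega

lemma three_dvd_n_false {n : ℕ} (hn : Nat.Prime n) (h3 : 3 < n) (h : 3 ∣ n) : False := by
  rcases (Nat.Prime.eq_one_or_self_of_dvd hn 3 h) with h' | h' <;> omega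

/-- exponent bounds -/
lemma exp_bound_two {n m : ℕ} (hodd : Odd n) (hd : Nat.totient m ∣ 2 * n) (h : 2 ^ 3 ∣ m) :
    False := by
  have h4 : Nat.totient 8 ∣ Nat.totient m := Nat.totient_dvd_of_dvd h
  have : (4 : ℕ) ∣ 2 * n := by
    have he : Nat.totient 8 = 4 := by decide
    rw [he] at h4; exact h4.trans hd
  exact two_dvd_n_false hodd (by omega)

lemma exp_bound_three {n m : ℕ} (hn : Nat.Prime n) (h3 : 3 < n)
    (hd : Nat.totient m ∣ 2 * n) (h : 3 ^ 2 ∣ m) : False := by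
  have h4 : Nat.totient 9 ∣ Nat.totient m := Nat.totient_dvd_of_dvd h
  have : (6 : ℕ) ∣ 2 * n := by
    have he : Nat.totient 9 = 6 := by decide
    rw [he] at h4; exact h4.trans hd
  exact three_dvd_n_false hn h3 (by omega)

lemma exp_bound_q {n m : ℕ} (h3 : 3 < n) (hq : Nat.Prime (2 * n + 1))
    (hd : Nat.totient m ∣ 2 * n) (h : (2 * n + 1) ^ 2 ∣ m) : False := by
  have h4 : Nat.totient ((2 * n + 1) ^ 2) ∣ Nat.totient m := Nat.totient_dvd_of_dvd h
  have he : Nat.totient ((2 * n + 1) ^ 2) = (2 * n + 1) * (2 * n) := by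
    rw [Nat.totient_prime_pow hq (by norm_num)]
    simp
  rw [he] at h4
  have h5 : (2 * n + 1) * (2 * n) ∣ 2 * n := h4.trans hd
  have h6 := Nat.le_of_dvd (by omega) h5
  nlinarith

/-- key divisibility when 2n+1 is prime -/
lemma key_dvd_prime {n m : ℕ} (hn : Nat.Prime n) (h3 : 3 < n) (hodd : Odd n)
    (hq : Nat.Prime (2 * n + 1)) (hd : Nat.totient m ∣ 2 * n) :
    m ∣ 12 * (2 * n + 1) := by
  rw [Nat.dvd_iff_prime_pow_dvd_dvd]
  intro p k hp hpk
  rcases Nat.eq_zero_or_pos k with rfl | hk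
  · simp
  have hpm : p ∣ m := (dvd_pow_self p hk.ne').trans hpk
  rcases prime_factor_classify hn h3 hodd hp hpm hd with rfl | rfl | rfl
  · have hk2 : k ≤ 2 := by
      by_contra hc
      exact exp_bound_two hodd hd ((pow_dvd_pow 2 (by omega)).trans hpk)
    calc (2:ℕ) ^ k ∣ 2 ^ 2 := pow_dvd_pow 2 hk2
    _ ∣ 12 * (2 * n + 1) := ⟨3 * (2 * n + 1), by ring⟩
  · have hk2 : k ≤ 1 := by
      by_contra hc
      exact exp_bound_three hn h3 hd ((pow_dvd_pow 3 (by omega)).trans hpk)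
    calc (3:ℕ) ^ k ∣ 3 ^ 1 := pow_dvd_pow 3 hk2
    _ ∣ 12 * (2 * n + 1) := ⟨4 * (2 * n + 1), by ring⟩
  · have hk2 : k ≤ 1 := by
      by_contra hc
      exact exp_bound_q h3 hq hd ((pow_dvd_pow _ (by omega)).trans hpk)
    calc (2*n+1:ℕ) ^ k ∣ (2*n+1) ^ 1 := pow_dvd_pow _ hk2
    _ ∣ 12 * (2 * n + 1) := ⟨12, by ring⟩

/-- key divisibility when 2n+1 is not prime -/
lemma key_dvd_nonprime {n m : ℕ} (hn : Nat.Prime n) (h3 : 3 < n) (hodd : Odd n)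
    (hq : ¬ Nat.Prime (2 * n + 1)) (hd : Nat.totient m ∣ 2 * n) :
    m ∣ 12 := by
  rw [Nat.dvd_iff_prime_pow_dvd_dvd]
  intro p k hp hpk
  rcases Nat.eq_zero_or_pos k with rfl | hk
  · simp
  have hpm : p ∣ m := (dvd_pow_self p hk.ne').trans hpk
  rcases prime_factor_classify hn h3 hodd hp hpm hd with rfl | rfl | rfl
  · have hk2 : k ≤ 2 := by
      by_contra hc
      exact exp_bound_two hodd hd ((pow_dvd_pow 2 (by omega)).trans hpk)
    calc (2:ℕ) ^ k ∣ 2 ^ 2 := pow_dvd_pow 2 hk2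
    _ ∣ 12 := ⟨3, by ring⟩
  · have hk2 : k ≤ 1 := by
      by_contra hc
      exact exp_bound_three hn h3 hd ((pow_dvd_pow 3 (by omega)).trans hpk)
    calc (3:ℕ) ^ k ∣ 3 ^ 1 := pow_dvd_pow 3 hk2
    _ ∣ 12 := ⟨4, by ring⟩
  · exact absurd hp hq

lemma div12_le_six {n m : ℕ} (hodd : Odd n)
    (hm12 : m ∣ 12) (hd : Nat.totient m ∣ 2 * n) : m ≤ 6 := by
  by_contra hc
  push_neg at hc
  have hle : m ≤ 12 := Nat.le_of_dvd (by norm_num) hm12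
  obtain ⟨c, hc12⟩ := hm12
  have hm12' : m = 12 := by
    rcases Nat.lt_or_ge c 2 with h | h
    · interval_cases c <;> omega
    · nlinarith
  subst hm12'
  have h4 : (4:ℕ) ∣ 2 * n := by
    have : Nat.totient 12 = 4 := by decide
    rwa [this] at hd
  exact two_dvd_n_false hodd (by omega)

/-- For an odd prime `n > 3`: `Φ(n) = 4n+2` if `2n+1` is prime, and `Φ(n) = 6` otherwise. -/
theorem Phi_of_odd_prime (n : ℕ) (hn : Nat.Prime n) (h3 : 3 < n) (hodd : Odd n) :
    (Nat.Prime (2 * n + 1) → Phi n = 4 * n + 2) ∧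
      (¬ Nat.Prime (2 * n + 1) → Phi n = 6) := by
  constructor
  · intro hq
    have hbound : ∀ m ∈ {m : ℕ | 0 < m ∧ Nat.totient m ∣ 2 * n}, m ≤ 4 * n + 2 := by
      rintro m ⟨hm, hd⟩
      have hdvd : m ∣ 12 * (2 * n + 1) := key_dvd_prime hn h3 hodd hq hd
      by_cases hqm : (2 * n + 1) ∣ m
      · obtain ⟨d, rfl⟩ := hqm
        have hd12 : d ∣ 12 := by
          rw [mul_comm 12 (2 * n + 1)] at hdvd
          exact (Nat.mul_dvd_mul_iff_left (show 0 < 2*n+1 by omega)).mp hdvd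
        have hqd : ¬ (2 * n + 1) ∣ d := by
          intro h
          have h1 := Nat.le_of_dvd (by norm_num) (h.trans hd12)
          obtain ⟨c, hc⟩ := h.trans hd12
          rcases Nat.lt_or_ge c 2 with h2 | h2
          · interval_cases c <;> omega
          · nlinarith
        have hcop : Nat.Coprime (2 * n + 1) d := (hq.coprime_iff_not_dvd).mpr hqd
        have htot : Nat.totient ((2 * n + 1) * d) = (2 * n) * Nat.totient d := by
          rw [Nat.totient_mul hcop, Nat.totient_prime hq, Nat.add_sub_cancel]
        rw [htot] at hd
        have hd1 : Nat.totient d ∣ 1 := by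
          have h2 : (2 * n) * Nat.totient d ∣ (2 * n) * 1 := by simpa using hd
          exact (Nat.mul_dvd_mul_iff_left (show 0 < 2*n by omega)).mp h2
        have := Nat.totient_eq_one_iff.mp (Nat.eq_one_of_dvd_one hd1)
        rcases this with rfl | rfl <;> omega
      · have hcop : Nat.Coprime m (2 * n + 1) := ((hq.coprime_iff_not_dvd).mpr hqm).symm
        have h12 : m ∣ 12 := hcop.dvd_of_dvd_mul_right hdvd
        have := Nat.le_of_dvd (by norm_num) h12
        omega
    have hmem : (4 * n + 2) ∈ {m : ℕ | 0 < m ∧ Nat.totient m ∣ 2 * n} := by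
      refine ⟨by omega, ?_⟩
      have h42 : 4 * n + 2 = 2 * (2 * n + 1) := by ring
      have hcop : Nat.Coprime 2 (2 * n + 1) := by
        rw [Nat.coprime_two_left]
        exact ⟨n, by ring⟩
      rw [h42, Nat.totient_mul hcop, Nat.totient_two, Nat.totient_prime hq]
      simp
    exact le_antisymm (csSup_le ⟨_, hmem⟩ hbound) (le_csSup ⟨_, hbound⟩ hmem)
  · intro hq
    have hbound : ∀ m ∈ {m : ℕ | 0 < m ∧ Nat.totient m ∣ 2 * n}, m ≤ 6 := by
      rintro m ⟨hm, hd⟩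
      exact div12_le_six hodd (key_dvd_nonprime hn h3 hodd hq hd) hd
    have hmem : (6 : ℕ) ∈ {m : ℕ | 0 < m ∧ Nat.totient m ∣ 2 * n} := by
      refine ⟨by norm_num, ?_⟩
      have : Nat.totient 6 = 2 := by decide
      rw [this]
      exact ⟨n, rfl⟩
    exact le_antisymm (csSup_le ⟨_, hmem⟩ hbound) (le_csSup ⟨_, hbound⟩ hmem)
end

section
/- Let n > 3 be an odd prime and m an even positive integer with m ≠ 6 and m not a power of 2, such that φ(m) divides 2n. Then m = 2q for an odd prime q with (q−1)/2 = n; in particular 2n+1 is prime and m = 4n+2. -/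
/-- Let `n > 3` be an odd prime and `m` an even positive integer, `m ≠ 6`,
`m` not a power of `2`, with `φ(m) ∣ 2n`.  Then `m = 2q` for an odd prime `q`
with `(q-1)/2 = n`; in particular `2n+1` is prime and `m = 4n+2`. -/
theorem eq_two_mul_prime (n m : ℕ) (hn : Nat.Prime n) (h3 : 3 < n) (hodd : Odd n)
    (hm : 0 < m) (heven : 2 ∣ m) (hne : m ≠ 6) (hpow : ¬ ∃ k : ℕ, m = 2 ^ k)
    (hdvd : Nat.totient m ∣ 2 * n) :
    ∃ q : ℕ, Nat.Prime q ∧ Odd q ∧ m = 2 * q ∧ (q - 1) / 2 = n ∧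
      Nat.Prime (2 * n + 1) ∧ m = 4 * n + 2 := by
  have hm0 : m ≠ 0 := hm.ne'
  set r := m.factorization 2 with hr_def
  set x := m / 2 ^ r with hx_def
  have hmx : 2 ^ r * x = m := Nat.ordProj_mul_ordCompl_eq_self m 2
  have hx0 : x ≠ 0 := by
    intro h; rw [h, mul_zero] at hmx; exact hm0 hmx.symm
  have hxodd : ¬ 2 ∣ x := Nat.not_dvd_ordCompl Nat.prime_two hm0
  have hx1 : x ≠ 1 := by
    intro h; exact hpow ⟨r, by rw [← hmx, h, mul_one]⟩
  have hx3 : 2 < x := by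
    rcases Nat.lt_or_ge x 3 with h | h
    · interval_cases x
      · exact absurd rfl hx0
      · exact absurd rfl hx1
      · exact absurd ⟨1, rfl⟩ hxodd
    · omega
  have hr1 : 1 ≤ r := Nat.Prime.factorization_pos_of_dvd Nat.prime_two hm0 heven
  have hcop : Nat.Coprime (2 ^ r) x :=
    Nat.Coprime.pow_left _ (Nat.coprime_ordCompl Nat.prime_two hm0)
  have hφsplit : m.totient = 2 ^ (r - 1) * x.totient := by
    rw [← hmx, Nat.totient_mul hcop, Nat.totient_prime_pow Nat.prime_two hr1]; norm_num
  obtain ⟨y, hy⟩ := Nat.totient_even hx3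
  have hy2 : x.totient = 2 * y := by omega
  have hdn : 2 ^ (r - 1) * y ∣ n := by
    have h1 : 2 * (2 ^ (r - 1) * y) ∣ 2 * n := by
      have hm' : m.totient = 2 * (2 ^ (r - 1) * y) := by rw [hφsplit, hy2]; ring
      rwa [hm'] at hdvd
    exact (Nat.mul_dvd_mul_iff_left (by norm_num : (0:ℕ) < 2)).mp h1
  have hnodd : n % 2 = 1 := Nat.odd_iff.mp hodd
  have hrr : r = 1 := by
    by_contra hne1
    have h2r : 2 ∣ 2 ^ (r - 1) := dvd_pow_self 2 (by omega)
    have h2n : 2 ∣ n := (h2r.trans (dvd_mul_right _ y)).trans hdn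
    omega
  rw [hrr] at hmx hdn
  norm_num at hdn
  have hm2x : m = 2 * x := by rw [← hmx]; ring
  -- prime factor analysis of x
  set p := x.minFac with hp_def
  have pp : Nat.Prime p := Nat.minFac_prime hx1
  have hpx : p ∣ x := Nat.minFac_dvd x
  have hp2 : p ≠ 2 := fun h => hxodd (h ▸ hpx)
  have hpodd : p % 2 = 1 := by
    have h2p : ¬ 2 ∣ p := fun h => hp2 ((Nat.prime_dvd_prime_iff_eq Nat.prime_two pp).mp h).symm
    omega
  have hp2le : 2 ≤ p := pp.two_le
  set b := x.factorization p with hb_def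
  set s := x / p ^ b with hs_def
  have hbs : p ^ b * s = x := Nat.ordProj_mul_ordCompl_eq_self x p
  have hb1 : 1 ≤ b := pp.factorization_pos_of_dvd hx0 hpx
  have hcops : Nat.Coprime (p ^ b) s :=
    Nat.Coprime.pow_left _ (Nat.coprime_ordCompl pp hx0)
  have hsodd : ¬ 2 ∣ s := fun h => hxodd (h.trans ((Nat.ordCompl_dvd x p)))
  have hs0 : s ≠ 0 := by
    intro h; rw [h, mul_zero] at hbs; exact hx0 hbs.symm
  have hφx : x.totient = p ^ (b - 1) * ((p - 1) * s.totient) := by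
    rw [← hbs, Nat.totient_mul hcops, Nat.totient_prime_pow pp hb1]; ring
  have hpd : p - 1 ∣ 2 * y := by
    have h := Nat.totient_dvd_of_dvd hpx
    rwa [Nat.totient_prime pp, hy2] at h
  have hs_one_of : s.totient = 1 → s = 1 := by
    intro h
    rcases Nat.totient_eq_one_iff.mp h with h1 | h2
    · exact h1
    · exact absurd (by omega : 2 ∣ s) hsodd
  clear_value s b p x r
  rcases hn.eq_one_or_self_of_dvd y hdn with hy1 | hyn
  · -- y = 1 : φ x = 2, so x = 3 and m = 6, contradiction
    rw [hy1, mul_one] at hy2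
    have hple : p - 1 ≤ 2 := Nat.le_of_dvd (by norm_num) (by rwa [hy1, mul_one] at hpd)
    have hp3 : p = 3 := by omega
    rw [hp3] at hφx
    have h' : x.totient = 2 * (3 ^ (b - 1) * s.totient) := by
      rw [hφx, (by norm_num : (3 : ℕ) - 1 = 2)]; ring
    have key : 3 ^ (b - 1) * s.totient = 1 := by omega
    have k2 : s.totient = 1 := Nat.eq_one_of_dvd_one ⟨3 ^ (b - 1), by rw [mul_comm]; omega⟩
    have k1 : 3 ^ (b - 1) = 1 := by
      rw [k2, mul_one] at key; exact key
    have hsone : s = 1 := hs_one_of k2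
    have hbone : b = 1 := by
      by_contra hb'
      have h3d : (3 : ℕ) ∣ 3 ^ (b - 1) := dvd_pow_self 3 (by omega)
      rw [k1] at h3d
      omega
    have hx_eq : x = 3 := by rw [← hbs, hsone, hbone, hp3]; ring
    exact absurd (by rw [hm2x, hx_eq]) hne
  · -- y = n : φ x = 2n
    rw [hyn] at hy2 hpd
    obtain ⟨t, ht⟩ : ∃ t, p = 2 * t + 1 := ⟨p / 2, by omega⟩
    have htn : t ∣ n := by
      have h2t : 2 * t ∣ 2 * n := by
        have : p - 1 = 2 * t := by omega
        rwa [this] at hpd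
      exact (Nat.mul_dvd_mul_iff_left (by norm_num : (0:ℕ) < 2)).mp h2t
    rcases hn.eq_one_or_self_of_dvd t htn with ht1 | htn'
    · -- p = 3
      have hp3 : p = 3 := by omega
      rw [hp3] at hφx
      have h' : x.totient = 2 * (3 ^ (b - 1) * s.totient) := by
        rw [hφx, (by norm_num : (3 : ℕ) - 1 = 2)]; ring
      have key : 3 ^ (b - 1) * s.totient = n := by omega
      have hφsdvd : s.totient ∣ n := ⟨3 ^ (b - 1), by rw [mul_comm]; omega⟩
      rcases hn.eq_one_or_self_of_dvd _ hφsdvd with hφs1 | hφsn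
      · have hsone : s = 1 := hs_one_of hφs1
        rw [hφs1, mul_one] at key
        have h3n : 3 ∣ n := by
          rcases Nat.eq_zero_or_pos (b - 1) with h | h
          · rw [h, pow_zero] at key; omega
          · exact key ▸ dvd_pow_self 3 (by omega)
        rcases hn.eq_one_or_self_of_dvd 3 h3n with h | h <;> omega
      · exfalso
        have hs2 : 2 < s := by
          rcases Nat.lt_or_ge s 3 with h | h
          · have hse : s = 1 := by omega
            have : s.totient = 1 := by rw [hse]; exact Nat.totient_one
            omega
          · omega
        obtain ⟨w, hw⟩ := Nat.totient_even hs2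
        omega
    · -- p = 2n + 1
      have hp2n : p = 2 * n + 1 := by omega
      have hp1 : p - 1 = 2 * n := by omega
      have h' : x.totient = 2 * n * (p ^ (b - 1) * s.totient) := by
        rw [hφx, hp1]; ring
      have key : p ^ (b - 1) * s.totient = 1 := by
        have h2 : 2 * n * (p ^ (b - 1) * s.totient) = 2 * n * 1 := by
          rw [mul_one, ← h', hy2]
        exact Nat.eq_of_mul_eq_mul_left (by omega) h2
      have k2 : s.totient = 1 := Nat.eq_one_of_dvd_one ⟨p ^ (b - 1), by rw [mul_comm]; omega⟩
      have k1 : p ^ (b - 1) = 1 := by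
        rw [k2, mul_one] at key; exact key
      have hsone : s = 1 := hs_one_of k2
      have hbone : b = 1 := by
        by_contra hb'
        have hpd2 : p ∣ p ^ (b - 1) := dvd_pow_self p (by omega)
        rw [k1] at hpd2
        have := Nat.eq_one_of_dvd_one hpd2
        omega
      have hx_eq : x = 2 * n + 1 := by rw [← hbs, hsone, hbone, ← hp2n]; ring
      have hqprime : Nat.Prime (2 * n + 1) := hp2n ▸ pp
      exact ⟨2 * n + 1, hqprime, ⟨n, by ring⟩, by rw [hm2x, hx_eq], by omega,
        hqprime, by rw [hm2x, hx_eq]; ring⟩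
end

section
/- Let p be a prime, g ≥ 1 and m ≥ 1 integers. Then mg ≤ ⌊log_p((1+p^{m/2})^{2g})⌋, and ⌊log_p((1+p^{m/2})^{2g})⌋ < g(m + 1 + v_p(2)), where v_p(2) = 1 if p = 2 and 0 otherwise. Moreover if (p,m) ∉ {(2,1),(2,2)} then ⌊log_p((1+p^{m/2})^{2g})⌋ < g(m+1). -/
/-- For a prime `p` and integers `g ≥ 1`, `m ≥ 1`, writing
`L = ⌊log_p((1 + p^{m/2})^{2g})⌋`, one has `mg ≤ L`, `L < g(m + 1 + v_p(2))`,
and moreover `L < g(m+1)` provided `(p,m) ∉ {(2,1),(2,2)}`. -/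
theorem floor_logb_bounds (p g m : ℕ) (hp : Nat.Prime p) (hg : 1 ≤ g) (hm : 1 ≤ m) :
    ((m * g : ℕ) : ℤ) ≤ ⌊Real.logb p ((1 + (p : ℝ) ^ ((m : ℝ) / 2)) ^ (2 * g))⌋ ∧
    ⌊Real.logb p ((1 + (p : ℝ) ^ ((m : ℝ) / 2)) ^ (2 * g))⌋
      < ((g * (m + 1 + padicValNat p 2) : ℕ) : ℤ) ∧
    (¬ ((p = 2 ∧ m = 1) ∨ (p = 2 ∧ m = 2)) →
      ⌊Real.logb p ((1 + (p : ℝ) ^ ((m : ℝ) / 2)) ^ (2 * g))⌋ < ((g * (m + 1) : ℕ) : ℤ)) := by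
  have hp1 : (1 : ℝ) < p := by exact_mod_cast hp.one_lt
  have hp0 : (0 : ℝ) < p := lt_trans one_pos hp1
  set t : ℝ := (p : ℝ) ^ ((m : ℝ) / 2) with ht
  have ht0 : 0 < t := Real.rpow_pos_of_pos hp0 _
  have ht2 : t ^ 2 = (p : ℝ) ^ m := by
    rw [ht, ← Real.rpow_natCast ((p:ℝ) ^ ((m:ℝ)/2)) 2, ← Real.rpow_mul hp0.le]
    norm_num
  have hpm : (p : ℝ) ^ m ≥ (p : ℝ) := by
    calc (p:ℝ) = (p:ℝ) ^ 1 := (pow_one _).symm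
    _ ≤ (p:ℝ) ^ m := pow_le_pow_right₀ hp1.le hm
  have hX : (0 : ℝ) < (1 + t) ^ (2 * g) := by positivity
  -- general upper bound kernel
  have key : ∀ k : ℕ, (1 + t) ^ 2 < (p : ℝ) ^ k →
      ⌊Real.logb p ((1 + t) ^ (2 * g))⌋ < ((g * k : ℕ) : ℤ) := by
    intro k hk
    rw [Int.floor_lt, Real.logb_lt_iff_lt_rpow hp1 hX, Real.rpow_intCast, zpow_natCast]
    calc (1 + t) ^ (2 * g) = ((1 + t) ^ 2) ^ g := by rw [← pow_mul]
    _ < ((p : ℝ) ^ k) ^ g := by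
        exact pow_lt_pow_left₀ hk (by positivity) (by omega)
    _ = (p : ℝ) ^ (g * k) := by rw [← pow_mul, mul_comm]
  refine ⟨?_, ?_, ?_⟩
  · rw [Int.le_floor, Real.le_logb_iff_rpow_le hp1 hX, Real.rpow_intCast, zpow_natCast]
    calc (p : ℝ) ^ (m * g) = ((p:ℝ) ^ m) ^ g := by rw [pow_mul]
    _ = (t ^ 2) ^ g := by rw [ht2]
    _ = t ^ (2 * g) := by rw [← pow_mul]
    _ ≤ (1 + t) ^ (2 * g) := pow_le_pow_left₀ ht0.le (by linarith) _
  · rcases eq_or_ne p 2 with h2 | h2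
    · have hv : padicValNat p 2 = 1 := by subst h2; simp
      rw [hv]
      apply key
      have : (p : ℝ) ^ (m + 1 + 1) = 4 * t ^ 2 := by
        rw [ht2, pow_add, pow_add]; subst h2; push_cast; ring
      rw [this]
      have ht2ge : t ^ 2 ≥ 2 := by rw [ht2]; subst h2; push_cast at hpm ⊢; linarith
      nlinarith [sq_nonneg (t - 1)]
    · have hv : padicValNat p 2 = 0 := by
        apply padicValNat.eq_zero_of_not_dvd
        intro hdvd
        have hle := Nat.le_of_dvd (by norm_num) hdvd
        interval_cases p <;> simp_all
      rw [hv]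
      apply key
      have hp3 : (3 : ℝ) ≤ p := by
        have : 3 ≤ p := by have := hp.two_le; omega
        exact_mod_cast this
      have : (p : ℝ) ^ (m + 1) = p * t ^ 2 := by rw [ht2, pow_succ]; ring
      rw [this]
      have ht2ge : t ^ 2 ≥ 3 := by rw [ht2]; linarith
      nlinarith [sq_nonneg (t - 1), ht0.le]
  · intro hne
    rcases eq_or_ne p 2 with h2 | h2
    · have hm3 : 3 ≤ m := by
        rcases Nat.lt_or_ge m 3 with h | h
        · interval_cases m <;> simp_all
        · exact h
      apply key
      have : (p : ℝ) ^ (m + 1) = 2 * t ^ 2 := by rw [ht2, pow_succ]; subst h2; push_cast; ring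
      rw [this]
      have ht2ge : t ^ 2 ≥ 8 := by
        rw [ht2]; subst h2
        calc (8 : ℝ) = ((2:ℕ):ℝ) ^ (3:ℕ) := by norm_num
        _ ≤ ((2:ℕ):ℝ) ^ m := by
            apply pow_le_pow_right₀ _ hm3
            norm_num
      nlinarith [sq_nonneg (t - 2)]
    · have hp3 : (3 : ℝ) ≤ p := by
        have : 3 ≤ p := by have := hp.two_le; omega
        exact_mod_cast this
      apply key
      have : (p : ℝ) ^ (m + 1) = p * t ^ 2 := by rw [ht2, pow_succ]; ring
      rw [this]
      have ht2ge : t ^ 2 ≥ 3 := by rw [ht2]; linarith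
      nlinarith [sq_nonneg (t - 1), ht0.le]
end
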